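/- arXiv:2011.06687 — 6 statements merged into one kernel-verified Lean document; each statement's English description precedes it below -/
import Mathlib

section
/- Let A ∈ ℝ^{m×n} (m ≥ 1) have all rows nonzero, and let r ∈ ℝ^m be a nonzero vector. Suppose an index j satisfies |r^{(j)}|² ≥ (1/2)( max_{1≤i≤m} |r^{(i)}|² + Σ_{i=1}^m (‖A^{(i)}‖₂²/‖A‖_F²)|r^{(i)}|² ). Then |r^{(j)}|² ≥ (min_{1≤i≤m} ‖A^{(i)}‖₂² / ‖A‖_F²) ‖r‖₂². -/
open Matrix

/-- if index `j` satisfies the GRMK greedy threshold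
`|r⁽ʲ⁾|² ≥ (1/2)(max_i |r⁽ⁱ⁾|² + Σ_i (‖A⁽ⁱ⁾‖₂²/‖A‖_F²)|r⁽ⁱ⁾|²)`, then
`|r⁽ʲ⁾|² ≥ (min_i ‖A⁽ⁱ⁾‖₂² / ‖A‖_F²) ‖r‖₂²`. -/
theorem grmk_threshold_lower_bound_first (m n : ℕ) (hm : 1 ≤ m)
    (A : Matrix (Fin m) (Fin n) ℝ)
    (hA : ∀ i, (fun j => A i j) ≠ 0)
    (r : Fin m → ℝ) (hr : r ≠ 0)
    (Mx : ℝ) (hMx : IsGreatest (Set.range fun i => (r i) ^ 2) Mx)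
    (mn : ℝ) (hmn : IsLeast (Set.range fun i => ∑ l, (A i l) ^ 2) mn)
    (j : Fin m)
    (hj : (r j) ^ 2 ≥
      (1 / 2) * (Mx + ∑ i, ((∑ l, (A i l) ^ 2) / ∑ i', ∑ l, (A i' l) ^ 2) * (r i) ^ 2)) :
    (r j) ^ 2 ≥ (mn / ∑ i, ∑ l, (A i l) ^ 2) * ∑ i, (r i) ^ 2 := by
  set F := ∑ i', ∑ l, (A i' l) ^ 2 with hF
  have hrow : ∀ i : Fin m, 0 < ∑ l, (A i l) ^ 2 := by
    intro i
    obtain ⟨l, hl⟩ : ∃ l, A i l ≠ 0 := by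
      by_contra h
      push_neg at h
      exact hA i (funext h)
    exact Finset.sum_pos' (fun _ _ => sq_nonneg _)
      ⟨l, Finset.mem_univ l, by positivity⟩
  have hFpos : 0 < F := Finset.sum_pos (fun i _ => hrow i) ⟨⟨0, hm⟩, Finset.mem_univ _⟩
  have hMx' : ∀ i, r i ^ 2 ≤ Mx := fun i => hMx.2 ⟨i, rfl⟩
  have hS_le : ∑ i, ((∑ l, (A i l) ^ 2) / F) * (r i) ^ 2 ≤ Mx := by
    calc ∑ i, ((∑ l, (A i l) ^ 2) / F) * (r i) ^ 2
        ≤ ∑ i, ((∑ l, (A i l) ^ 2) / F) * Mx := by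
          refine Finset.sum_le_sum fun i _ => ?_
          exact mul_le_mul_of_nonneg_left (hMx' i) (by positivity)
      _ = Mx := by
          rw [← Finset.sum_mul, ← Finset.sum_div, div_self hFpos.ne', one_mul]
  have hS_ge : (mn / F) * ∑ i, (r i) ^ 2 ≤
      ∑ i, ((∑ l, (A i l) ^ 2) / F) * (r i) ^ 2 := by
    rw [Finset.mul_sum]
    refine Finset.sum_le_sum fun i _ => ?_
    have : mn ≤ ∑ l, (A i l) ^ 2 := hmn.2 ⟨i, rfl⟩
    gcongr
  linarith
end

section
/- Let A ∈ ℝ^{m×n} with m ≥ 2 have all rows nonzero, and let r ∈ ℝ^m be a nonzero vector with r^{(j₀)} = 0 for some fixed index j₀. Suppose an index j satisfies |r^{(j)}|² ≥ (1/2)( max_{1≤i≤m} |r^{(i)}|² + Σ_{i=1}^m (‖A^{(i)}‖₂²/‖A‖_F²)|r^{(i)}|² ). Then |r^{(j)}|² ≥ (1/2) · (min_{i≠j₀} ‖A^{(i)}‖₂² / ‖A‖_F²) · ( ‖A‖_F²/(‖A‖_F² − min_{1≤i≤m} ‖A^{(i)}‖₂²) + 1 ) · ‖r‖₂². -/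
open Matrix

/-!
Write `w i = ‖A⁽ⁱ⁾‖₂²`, `F = Σ w i` and `y i = |r⁽ⁱ⁾|²`. Since `y j₀ = 0`, only rows other than
`j₀` contribute to `Σ w i y i`, which is therefore at least `(min_{i≠j₀} w i) · ‖r‖₂²` and at most
`(F − w j₀) · max y ≤ (F − min w) · max y`. The first bound controls the weighted mean
`Σ (w i / F) y i`, the two together control `max y`, and averaging gives the claim.
-/

section WeightedSums

variable {ι : Type*} [Fintype ι] [DecidableEq ι] {w y : ι → ℝ} {j₀ : ι}

lemma mul_sum_le_sum_mul_of_apply_eq_zero {c : ℝ} (hy : ∀ i, 0 ≤ y i) (hy₀ : y j₀ = 0)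
    (hc : ∀ i, i ≠ j₀ → c ≤ w i) : c * ∑ i, y i ≤ ∑ i, w i * y i := by
  rw [Finset.mul_sum]
  refine Finset.sum_le_sum fun i _ => ?_
  by_cases hi : i = j₀
  · simp [hi, hy₀]
  · exact mul_le_mul_of_nonneg_right (hc i hi) (hy i)

lemma sum_mul_le_of_apply_eq_zero {M : ℝ} (hw : ∀ i, 0 ≤ w i) (hy₀ : y j₀ = 0)
    (hM : ∀ i, y i ≤ M) : ∑ i, w i * y i ≤ (∑ i, w i - w j₀) * M := by
  rw [← Finset.sum_erase_eq_sub (Finset.mem_univ j₀), Finset.sum_mul,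
    ← Finset.sum_erase (a := j₀) _ (by simp [hy₀])]
  exact Finset.sum_le_sum fun i _ => mul_le_mul_of_nonneg_left (hM i) (hw i)

lemma le_sum_sub_of_ne (hw : ∀ i, 0 ≤ w i) {i : ι} (hi : i ≠ j₀) :
    w i ≤ ∑ i, w i - w j₀ := by
  rw [← Finset.sum_erase_eq_sub (Finset.mem_univ j₀)]
  exact Finset.single_le_sum (fun k _ => hw k) (Finset.mem_erase.2 ⟨hi, Finset.mem_univ i⟩)

lemma threshold_ge_of_apply_eq_zero (hw : ∀ i, 0 ≤ w i) (hy : ∀ i, 0 ≤ y i) (hy₀ : y j₀ = 0)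
    {M : ℝ} (hM : IsGreatest (Set.range y) M) {a : ℝ} (ha : IsLeast (Set.range w) a)
    {b : ℝ} (hb : IsLeast (w '' {i | i ≠ j₀}) b) :
    (1 / 2) * (b / ∑ i, w i) * ((∑ i, w i) / ((∑ i, w i) - a) + 1) * ∑ i, y i ≤
      (1 / 2) * (M + ∑ i, (w i / ∑ i', w i') * y i) := by
  set F := ∑ i, w i
  obtain ⟨i₁, hi₁, rfl⟩ := hb.1
  have hb_le : ∀ i, i ≠ j₀ → w i₁ ≤ w i := fun i hi => hb.2 ⟨i, hi, rfl⟩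
  have hM_ge : ∀ i, y i ≤ M := fun i => hM.2 ⟨i, rfl⟩
  have hM₀ : 0 ≤ M := (hy j₀).trans (hM_ge j₀)
  have ha_le : F - w j₀ ≤ F - a := sub_le_sub_left (ha.2 ⟨j₀, rfl⟩) F
  have hweighted : w i₁ * ∑ i, y i ≤ ∑ i, w i * y i :=
    mul_sum_le_sum_mul_of_apply_eq_zero hy hy₀ hb_le
  have hmean : w i₁ / F * ∑ i, y i ≤ ∑ i, (w i / F) * y i := by
    simp_rw [div_mul_eq_mul_div, ← Finset.sum_div]
    exact div_le_div_of_nonneg_right hweighted (Finset.sum_nonneg fun i _ => hw i)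
  rcases (hw i₁).eq_or_lt with hzero | hpos
  · rw [← hzero]
    simpa using add_nonneg hM₀ (hmean.trans' (by simp [← hzero]))
  have hgap : w i₁ ≤ F - a :=
    (le_sum_sub_of_ne hw hi₁).trans ha_le
  have hmax : w i₁ * (∑ i, y i) / (F - a) ≤ M := by
    rw [div_le_iff₀ (hpos.trans_le hgap), mul_comm M]
    exact hweighted.trans <| (sum_mul_le_of_apply_eq_zero hw hy₀ hM_ge).trans
      (mul_le_mul_of_nonneg_right ha_le hM₀)
  have hF : F ≠ 0 := by
    have : w i₁ ≤ F := (le_sum_sub_of_ne hw hi₁).trans (sub_le_self F (hw j₀))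
    exact (hpos.trans_le this).ne'
  calc (1 / 2) * (w i₁ / F) * (F / (F - a) + 1) * ∑ i, y i
      = (1 / 2) * (w i₁ * (∑ i, y i) / (F - a) + w i₁ / F * ∑ i, y i) := by
        field_simp
    _ ≤ (1 / 2) * (M + ∑ i, (w i / F) * y i) := by gcongr

end WeightedSums

theorem grmk_threshold_lower_bound_later_general (m n : ℕ)
    (A : Matrix (Fin m) (Fin n) ℝ)
    (r : Fin m → ℝ)
    (j₀ : Fin m) (hj₀ : r j₀ = 0)
    (Mx : ℝ) (hMx : IsGreatest (Set.range fun i => (r i) ^ 2) Mx)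
    (mnAll : ℝ) (hmnAll : IsLeast (Set.range fun i => ∑ l, (A i l) ^ 2) mnAll)
    (mnNe : ℝ) (hmnNe : IsLeast ((fun i => ∑ l, (A i l) ^ 2) '' {i | i ≠ j₀}) mnNe)
    (j : Fin m)
    (hj : (r j) ^ 2 ≥
      (1 / 2) * (Mx + ∑ i, ((∑ l, (A i l) ^ 2) / ∑ i', ∑ l, (A i' l) ^ 2) * (r i) ^ 2)) :
    (r j) ^ 2 ≥
      (1 / 2) * (mnNe / ∑ i, ∑ l, (A i l) ^ 2) *
        ((∑ i, ∑ l, (A i l) ^ 2) / ((∑ i, ∑ l, (A i l) ^ 2) - mnAll) + 1) *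
        ∑ i, (r i) ^ 2 :=
  hj.trans' <| threshold_ge_of_apply_eq_zero (fun i => Finset.sum_nonneg fun l _ => sq_nonneg _)
    (fun i => sq_nonneg _) (by simp [hj₀]) hMx hmnAll hmnNe

/-- if the residual vanishes at some index `j₀` and index `j` satisfies the
GRMK greedy threshold, then
`|r⁽ʲ⁾|² ≥ (1/2) (min_{i≠j₀} ‖A⁽ⁱ⁾‖₂² / ‖A‖_F²) (‖A‖_F²/(‖A‖_F² − min_i ‖A⁽ⁱ⁾‖₂²) + 1) ‖r‖₂²`. -/
theorem grmk_threshold_lower_bound_later (m n : ℕ) (hm : 2 ≤ m)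
    (A : Matrix (Fin m) (Fin n) ℝ)
    (hA : ∀ i, (fun j => A i j) ≠ 0)
    (r : Fin m → ℝ) (hr : r ≠ 0)
    (j₀ : Fin m) (hj₀ : r j₀ = 0)
    (Mx : ℝ) (hMx : IsGreatest (Set.range fun i => (r i) ^ 2) Mx)
    (mnAll : ℝ) (hmnAll : IsLeast (Set.range fun i => ∑ l, (A i l) ^ 2) mnAll)
    (mnNe : ℝ) (hmnNe : IsLeast ((fun i => ∑ l, (A i l) ^ 2) '' {i | i ≠ j₀}) mnNe)
    (j : Fin m)
    (hj : (r j) ^ 2 ≥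
      (1 / 2) * (Mx + ∑ i, ((∑ l, (A i l) ^ 2) / ∑ i', ∑ l, (A i' l) ^ 2) * (r i) ^ 2)) :
    (r j) ^ 2 ≥
      (1 / 2) * (mnNe / ∑ i, ∑ l, (A i l) ^ 2) *
        ((∑ i, ∑ l, (A i l) ^ 2) / ((∑ i, ∑ l, (A i l) ^ 2) - mnAll) + 1) *
        ∑ i, (r i) ^ 2 :=
  grmk_threshold_lower_bound_later_general m n A r j₀ hj₀ Mx hMx mnAll hmnAll mnNe hmnNe j hj
end

section
/- Let A ∈ ℝ^{m×n} have all rows nonzero, b ∈ ℝ^m, and x⋆ ∈ ℝⁿ with A x⋆ = b. Let λ > 0 satisfy ‖Au‖₂² ≥ λ‖u‖₂² for every u in the column space R(Aᵀ) of Aᵀ. Let x₀ ∈ ℝⁿ with x₀ − x⋆ ∈ R(Aᵀ) and x₀ ≠ x⋆, let r₀ = b − Ax₀, and define the index set I₀ = { i : |r₀^{(i)}|² ≥ (1/2)( max_{1≤l≤m} |r₀^{(l)}|² + Σ_{l=1}^m (‖A^{(l)}‖₂²/‖A‖_F²)|r₀^{(l)}|² ) }, the weights d_i = |r₀^{(i)}|²/‖A^{(i)}‖₂²,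 the probabilities p_i = d_i/Σ_{j∈I₀} d_j for i ∈ I₀, and the Kaczmarz updates x₁(i) = x₀ + (r₀^{(i)}/‖A^{(i)}‖₂²)(A^{(i)})ᵀ. Then Σ_{i∈I₀} p_i ‖x₁(i) − x⋆‖₂² ≤ ( 1 − (min_{1≤i≤m}‖A^{(i)}‖₂² / max_{i∈I₀}‖A^{(i)}‖₂²) · (λ/‖A‖_F²) ) ‖x₀ − x⋆‖₂². -/
open Matrix

noncomputable def rowSq {m n : ℕ} (A : Matrix (Fin m) (Fin n) ℝ) (i : Fin m) : ℝ :=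
  ∑ j, (A i j) ^ 2

noncomputable def frobSq {m n : ℕ} (A : Matrix (Fin m) (Fin n) ℝ) : ℝ :=
  ∑ i, rowSq A i

noncomputable def res {m n : ℕ} (A : Matrix (Fin m) (Fin n) ℝ) (b : Fin m → ℝ)
    (x : Fin n → ℝ) (i : Fin m) : ℝ :=
  b i - A.mulVec x i

noncomputable def kUpd {m n : ℕ} (A : Matrix (Fin m) (Fin n) ℝ) (b : Fin m → ℝ)
    (x : Fin n → ℝ) (i : Fin m) : Fin n → ℝ :=
  x + (res A b x i / rowSq A i) • (fun j => A i j)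

noncomputable def grmkProb {m n : ℕ} (A : Matrix (Fin m) (Fin n) ℝ) (b : Fin m → ℝ)
    (x : Fin n → ℝ) (I : Finset (Fin m)) (i : Fin m) : ℝ :=
  ((res A b x i) ^ 2 / rowSq A i) / ∑ j ∈ I, (res A b x j) ^ 2 / rowSq A j

/-- the first-step bound (4eq) of Theorem 1 for the GRMK method. -/
theorem grmk_first_step_bound (m n : ℕ)
    (A : Matrix (Fin m) (Fin n) ℝ)
    (hA : ∀ i, (fun j => A i j) ≠ 0)
    (b : Fin m → ℝ) (xs : Fin n → ℝ) (hxs : A.mulVec xs = b)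
    (lam : ℝ) (hlam : 0 < lam)
    (hspec : ∀ u : Fin n → ℝ, (∃ y : Fin m → ℝ, u = Aᵀ.mulVec y) →
      ∑ i, (A.mulVec u i) ^ 2 ≥ lam * ∑ j, (u j) ^ 2)
    (x0 : Fin n → ℝ) (hx0mem : ∃ y : Fin m → ℝ, x0 - xs = Aᵀ.mulVec y)
    (hx0ne : x0 ≠ xs)
    (MxR : ℝ) (hMxR : IsGreatest (Set.range fun i => (res A b x0 i) ^ 2) MxR)
    (I0 : Finset (Fin m))
    (hI0 : ∀ i, i ∈ I0 ↔ (res A b x0 i) ^ 2 ≥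
      (1 / 2) * (MxR + ∑ l, (rowSq A l / frobSq A) * (res A b x0 l) ^ 2))
    (MA : ℝ) (hMA : IsGreatest ((fun i => rowSq A i) '' (I0 : Set (Fin m))) MA)
    (mA : ℝ) (hmA : IsLeast (Set.range fun i => rowSq A i) mA) :
    ∑ i ∈ I0, grmkProb A b x0 I0 i * ∑ j, (kUpd A b x0 i j - xs j) ^ 2
      ≤ (1 - (mA / MA) * (lam / frobSq A)) * ∑ j, (x0 j - xs j) ^ 2 := by
  have hrow : ∀ i, 0 < rowSq A i := by
    intro i
    have hex : ∃ j, A i j ≠ 0 := by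
      by_contra h; push_neg at h; exact hA i (funext h)
    obtain ⟨j, hj⟩ := hex
    exact Finset.sum_pos' (fun k _ => sq_nonneg _) ⟨j, Finset.mem_univ j, by positivity⟩
  have hFpos : 0 < frobSq A := by
    obtain ⟨i0, -⟩ := hmA.1
    exact Finset.sum_pos (fun i _ => hrow i) ⟨i0, Finset.mem_univ i0⟩
  have hmApos : 0 < mA := by
    obtain ⟨i0, hi0⟩ := hmA.1
    rw [← hi0]; exact hrow i0
  obtain ⟨iM, hiMmem, hiMeq⟩ := hMA.1
  have hMApos : 0 < MA := by rw [← hiMeq]; exact hrow iM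
  have hepos : 0 < ∑ j, (x0 j - xs j) ^ 2 := by
    have hex : ∃ j, x0 j ≠ xs j := by
      by_contra h; push_neg at h; exact hx0ne (funext h)
    obtain ⟨j, hj⟩ := hex
    have h1 : x0 j - xs j ≠ 0 := sub_ne_zero.mpr hj
    exact Finset.sum_pos' (fun k _ => sq_nonneg _) ⟨j, Finset.mem_univ j, by positivity⟩
  have hres : ∀ i, res A b x0 i = A.mulVec (xs - x0) i := by
    intro i
    rw [Matrix.mulVec_sub, hxs]
    simp [res]
  -- spectral bound on the residual
  have hnormr : lam * ∑ j, (x0 j - xs j) ^ 2 ≤ ∑ i, (res A b x0 i) ^ 2 := by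
    obtain ⟨y, hy⟩ := hx0mem
    have hu : xs - x0 = Aᵀ.mulVec (-y) := by
      rw [Matrix.mulVec_neg, ← hy, neg_sub]
    have h := hspec (xs - x0) ⟨-y, hu⟩
    have h1 : ∑ j, ((xs - x0) j) ^ 2 = ∑ j, (x0 j - xs j) ^ 2 :=
      Finset.sum_congr rfl fun j _ => by simp [Pi.sub_apply]; ring
    have h2 : ∑ i, (A.mulVec (xs - x0) i) ^ 2 = ∑ i, (res A b x0 i) ^ 2 :=
      Finset.sum_congr rfl fun i _ => by rw [hres i]
    rw [h1, h2] at h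
    exact h
  -- average bound
  have havgMxR : ∑ l, (rowSq A l / frobSq A) * (res A b x0 l) ^ 2 ≤ MxR := by
    calc ∑ l, (rowSq A l / frobSq A) * (res A b x0 l) ^ 2
        ≤ ∑ l, (rowSq A l / frobSq A) * MxR := by
          apply Finset.sum_le_sum
          intro l _
          exact mul_le_mul_of_nonneg_left (hMxR.2 ⟨l, rfl⟩) (div_nonneg (hrow l).le hFpos.le)
      _ = MxR := by
          rw [← Finset.sum_mul, ← Finset.sum_div, ← frobSq, div_self hFpos.ne', one_mul]
  have havglb : (mA / frobSq A) * ∑ l, (res A b x0 l) ^ 2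
      ≤ ∑ l, (rowSq A l / frobSq A) * (res A b x0 l) ^ 2 := by
    rw [Finset.mul_sum]
    apply Finset.sum_le_sum
    intro l _
    apply mul_le_mul_of_nonneg_right _ (sq_nonneg _)
    gcongr
    exact hmA.2 ⟨l, rfl⟩
  -- lower bound on D i for i ∈ I0
  have hc : 0 < (mA / MA) * (lam / frobSq A) := by positivity
  have hDS : ∀ i ∈ I0, (mA / MA) * (lam / frobSq A) * ∑ j, (x0 j - xs j) ^ 2
      ≤ (res A b x0 i) ^ 2 / rowSq A i := by
    intro i hi
    have h1 : (mA / frobSq A) * (lam * ∑ j, (x0 j - xs j) ^ 2) ≤ (res A b x0 i) ^ 2 := by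
      calc (mA / frobSq A) * (lam * ∑ j, (x0 j - xs j) ^ 2)
          ≤ (mA / frobSq A) * ∑ l, (res A b x0 l) ^ 2 :=
            mul_le_mul_of_nonneg_left hnormr (by positivity)
        _ ≤ ∑ l, (rowSq A l / frobSq A) * (res A b x0 l) ^ 2 := havglb
        _ ≤ (1 / 2) * (MxR + ∑ l, (rowSq A l / frobSq A) * (res A b x0 l) ^ 2) := by
            linarith [havgMxR]
        _ ≤ (res A b x0 i) ^ 2 := (hI0 i).1 hi
    have h2 : (res A b x0 i) ^ 2 / MA ≤ (res A b x0 i) ^ 2 / rowSq A i := by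
      apply div_le_div_of_nonneg_left (sq_nonneg _) (hrow i)
      rw [← hiMeq] at hMA ⊢
      exact hMA.2 ⟨i, hi, rfl⟩
    calc (mA / MA) * (lam / frobSq A) * ∑ j, (x0 j - xs j) ^ 2
        = (mA / frobSq A) * (lam * ∑ j, (x0 j - xs j) ^ 2) / MA := by ring
      _ ≤ (res A b x0 i) ^ 2 / MA := by
          gcongr
      _ ≤ _ := h2
  have hSpos : 0 < ∑ j ∈ I0, (res A b x0 j) ^ 2 / rowSq A j := by
    apply Finset.sum_pos _ ⟨iM, hiMmem⟩
    intro i hi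
    exact lt_of_lt_of_le (by positivity) (hDS i hi)
  -- Kaczmarz identity
  have hK : ∀ i, ∑ j, (kUpd A b x0 i j - xs j) ^ 2
      = (∑ j, (x0 j - xs j) ^ 2) - (res A b x0 i) ^ 2 / rowSq A i := by
    intro i
    have hρ := (hrow i).ne'
    have hdot : ∑ j, A i j * (x0 j - xs j) = - res A b x0 i := by
      have : A.mulVec (xs - x0) i = ∑ j, A i j * (xs j - x0 j) := by
        simp [Matrix.mulVec, dotProduct, Pi.sub_apply]
      rw [hres i, this, ← Finset.sum_neg_distrib]
      exact Finset.sum_congr rfl fun j _ => by ring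
    have hexp : ∀ j, (kUpd A b x0 i j - xs j) ^ 2
        = (x0 j - xs j) ^ 2
          + (2 * (res A b x0 i / rowSq A i)) * (A i j * (x0 j - xs j))
          + (res A b x0 i / rowSq A i) ^ 2 * (A i j) ^ 2 := by
      intro j
      simp only [kUpd, Pi.add_apply, Pi.smul_apply, smul_eq_mul]
      ring
    rw [Finset.sum_congr rfl fun j _ => hexp j]
    rw [Finset.sum_add_distrib, Finset.sum_add_distrib, ← Finset.mul_sum, ← Finset.mul_sum,
      hdot, ← rowSq]
    field_simp
    ring
  -- assemble
  have hsum1 : ∑ i ∈ I0, ((res A b x0 i) ^ 2 / rowSq A i)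
      / (∑ j ∈ I0, (res A b x0 j) ^ 2 / rowSq A j) = 1 := by
    rw [← Finset.sum_div, div_self hSpos.ne']
  have hpnn : ∀ i, 0 ≤ ((res A b x0 i) ^ 2 / rowSq A i)
      / (∑ j ∈ I0, (res A b x0 j) ^ 2 / rowSq A j) := by
    intro i
    exact div_nonneg (div_nonneg (sq_nonneg _) (hrow i).le) hSpos.le
  have hub : (mA / MA) * (lam / frobSq A) * ∑ j, (x0 j - xs j) ^ 2
      ≤ ∑ i ∈ I0, (((res A b x0 i) ^ 2 / rowSq A i)
          / (∑ j ∈ I0, (res A b x0 j) ^ 2 / rowSq A j)) * ((res A b x0 i) ^ 2 / rowSq A i) := by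
    calc (mA / MA) * (lam / frobSq A) * ∑ j, (x0 j - xs j) ^ 2
        = ∑ i ∈ I0, (((res A b x0 i) ^ 2 / rowSq A i)
            / (∑ j ∈ I0, (res A b x0 j) ^ 2 / rowSq A j))
            * ((mA / MA) * (lam / frobSq A) * ∑ j, (x0 j - xs j) ^ 2) := by
          rw [← Finset.sum_mul, hsum1, one_mul]
      _ ≤ _ := Finset.sum_le_sum fun i hi =>
          mul_le_mul_of_nonneg_left (hDS i hi) (hpnn i)
  calc ∑ i ∈ I0, grmkProb A b x0 I0 i * ∑ j, (kUpd A b x0 i j - xs j) ^ 2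
      = ∑ i ∈ I0, (((res A b x0 i) ^ 2 / rowSq A i)
          / (∑ j ∈ I0, (res A b x0 j) ^ 2 / rowSq A j))
          * ((∑ j, (x0 j - xs j) ^ 2) - (res A b x0 i) ^ 2 / rowSq A i) :=
        Finset.sum_congr rfl fun i _ => by rw [hK i]; rfl
    _ = (∑ i ∈ I0, ((res A b x0 i) ^ 2 / rowSq A i)
          / (∑ j ∈ I0, (res A b x0 j) ^ 2 / rowSq A j)) * (∑ j, (x0 j - xs j) ^ 2)
        - ∑ i ∈ I0, (((res A b x0 i) ^ 2 / rowSq A i)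
          / (∑ j ∈ I0, (res A b x0 j) ^ 2 / rowSq A j)) * ((res A b x0 i) ^ 2 / rowSq A i) := by
        rw [Finset.sum_mul, ← Finset.sum_sub_distrib]
        exact Finset.sum_congr rfl fun i _ => by ring
    _ = (∑ j, (x0 j - xs j) ^ 2)
        - ∑ i ∈ I0, (((res A b x0 i) ^ 2 / rowSq A i)
          / (∑ j ∈ I0, (res A b x0 j) ^ 2 / rowSq A j)) * ((res A b x0 i) ^ 2 / rowSq A i) := by
        rw [hsum1, one_mul]
    _ ≤ (∑ j, (x0 j - xs j) ^ 2) - (mA / MA) * (lam / frobSq A) * ∑ j, (x0 j - xs j) ^ 2 := by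
        linarith [hub]
    _ = (1 - (mA / MA) * (lam / frobSq A)) * ∑ j, (x0 j - xs j) ^ 2 := by ring
end

section
/- Let A ∈ ℝ^{m×n} with m ≥ 2 have all rows nonzero, b ∈ ℝ^m, and x⋆ ∈ ℝⁿ with A x⋆ = b. Let λ > 0 satisfy ‖Au‖₂² ≥ λ‖u‖₂² for every u in the column space R(Aᵀ) of Aᵀ. Let x_k ∈ ℝⁿ with x_k − x⋆ ∈ R(Aᵀ) and x_k ≠ x⋆, and let r_k = b − Ax_k. Suppose there exists an index j₀ with r_k^{(j₀)} = 0. Define the index set I_k = { i : |r_k^{(i)}|² ≥ (1/2)( max_{1≤l≤m} |r_k^{(l)}|² + Σ_{l=1}^m (‖A^{(l)}‖₂²/‖A‖_F²)|r_k^{(l)}|² ) }, the weights d_i = |r_k^{(i)}|²/‖A^{(i)}‖₂², the probabilities p_i = d_i/Σ_{j∈I_k} d_j for i ∈ I_k, and the Kaczmarz updates x_{k+1}(i) = x_k + (r_k^{(i)}/‖A^{(i)}‖₂²)(A^{(i)})ᵀ. Then Σ_{i∈I_k} p_i ‖x_{k+1}(i) − x⋆‖₂² ≤ ( 1 − (1/2)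 · (min_{i≠j₀}‖A^{(i)}‖₂² / max_{i∈I_k}‖A^{(i)}‖₂²) · (λ/‖A‖_F²) · ( ‖A‖_F²/(‖A‖_F² − min_{1≤i≤m}‖A^{(i)}‖₂²) + 1 ) ) ‖x_k − x⋆‖₂². -/
open Matrix

/-- the bound (5eq) of Theorem 1 for the GRMK method (for iterates `k ≥ 1`,
where the residual vanishes at the previously used index `j₀`). -/
theorem grmk_later_step_bound (m n : ℕ) (hm : 2 ≤ m)
    (A : Matrix (Fin m) (Fin n) ℝ)
    (hA : ∀ i, (fun j => A i j) ≠ 0)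
    (b : Fin m → ℝ) (xs : Fin n → ℝ) (hxs : A.mulVec xs = b)
    (lam : ℝ) (hlam : 0 < lam)
    (hspec : ∀ u : Fin n → ℝ, (∃ y : Fin m → ℝ, u = Aᵀ.mulVec y) →
      ∑ i, (A.mulVec u i) ^ 2 ≥ lam * ∑ j, (u j) ^ 2)
    (xk : Fin n → ℝ) (hxkmem : ∃ y : Fin m → ℝ, xk - xs = Aᵀ.mulVec y)
    (hxkne : xk ≠ xs)
    (j₀ : Fin m) (hj₀ : res A b xk j₀ = 0)
    (MxR : ℝ) (hMxR : IsGreatest (Set.range fun i => (res A b xk i) ^ 2) MxR)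
    (Ik : Finset (Fin m))
    (hIk : ∀ i, i ∈ Ik ↔ (res A b xk i) ^ 2 ≥
      (1 / 2) * (MxR + ∑ l, (rowSq A l / frobSq A) * (res A b xk l) ^ 2))
    (MA : ℝ) (hMA : IsGreatest ((fun i => rowSq A i) '' (Ik : Set (Fin m))) MA)
    (mAll : ℝ) (hmAll : IsLeast (Set.range fun i => rowSq A i) mAll)
    (mNe : ℝ) (hmNe : IsLeast ((fun i => rowSq A i) '' {i | i ≠ j₀}) mNe) :
    ∑ i ∈ Ik, grmkProb A b xk Ik i * ∑ j, (kUpd A b xk i j - xs j) ^ 2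
      ≤ (1 - (1 / 2) * (mNe / MA) * (lam / frobSq A) *
            (frobSq A / (frobSq A - mAll) + 1)) * ∑ j, (xk j - xs j) ^ 2 := by
  classical
  haveI : Nonempty (Fin m) := Fin.pos_iff_nonempty.mp (by omega)
  set r : Fin m → ℝ := res A b xk with hr
  set F : ℝ := frobSq A with hF
  set E : ℝ := ∑ j, (xk j - xs j) ^ 2 with hE
  -- positivity of rows and Frobenius norm
  have hrow : ∀ i, 0 < rowSq A i := by
    intro i
    obtain ⟨j, hj⟩ := Function.ne_iff.mp (hA i)
    refine Finset.sum_pos' (fun k _ => sq_nonneg _) ⟨j, Finset.mem_univ j, ?_⟩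
    have : A i j ≠ 0 := hj
    positivity
  have hFs : F = ∑ i, rowSq A i := hF
  have hFpos : 0 < F := by rw [hFs]; exact Finset.sum_pos (fun i _ => hrow i) Finset.univ_nonempty
  -- residual identity
  have hAe : ∀ i, ∑ j, A i j * (xk j - xs j) = - r i := by
    intro i
    have h1 : ∑ j, A i j * (xk j - xs j) = A.mulVec xk i - A.mulVec xs i := by
      simp [Matrix.mulVec, dotProduct, mul_sub, Finset.sum_sub_distrib]
    rw [h1, congrFun hxs i]
    simp [hr, res]
  -- spectral bound
  have hspec' : lam * E ≤ ∑ i, (r i) ^ 2 := by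
    obtain ⟨y, hy⟩ := hxkmem
    have hu : xs - xk = Aᵀ.mulVec (-y) := by
      rw [Matrix.mulVec_neg, ← hy]; ext j; simp
    have h2 := hspec (xs - xk) ⟨-y, hu⟩
    have h3 : ∑ i, (A.mulVec (xs - xk) i) ^ 2 = ∑ i, (r i) ^ 2 := by
      refine Finset.sum_congr rfl (fun i _ => ?_)
      rw [Matrix.mulVec_sub]
      simp only [Pi.sub_apply]
      rw [hr]
      simp [res, congrFun hxs i]
    have h4 : ∑ j, ((xs - xk) j) ^ 2 = E := by
      rw [hE]; exact Finset.sum_congr rfl (fun j _ => by simp [Pi.sub_apply]; ring)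
    rw [h3, h4] at h2; exact h2
  have hEpos : 0 < E := by
    have hj : ∃ j, xk j ≠ xs j := by
      by_contra h; push_neg at h; exact hxkne (funext h)
    obtain ⟨j, hj⟩ := hj
    have : xk j - xs j ≠ 0 := sub_ne_zero_of_ne hj
    rw [hE]
    exact Finset.sum_pos' (fun k _ => sq_nonneg _) ⟨j, Finset.mem_univ j, by positivity⟩
  have hr2pos : 0 < ∑ i, (r i) ^ 2 := lt_of_lt_of_le (by positivity) hspec'
  -- MxR positive
  have hMxRub : ∀ i, (r i) ^ 2 ≤ MxR := fun i => hMxR.2 ⟨i, rfl⟩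
  have hMxRpos : 0 < MxR := by
    obtain ⟨i0, hi0⟩ : ∃ i, r i ≠ 0 := by
      by_contra h; push_neg at h; simp [h] at hr2pos
    exact lt_of_lt_of_le (by positivity) (hMxRub i0)
  -- the greedy threshold sum T
  set T : ℝ := ∑ l, (rowSq A l / F) * (r l) ^ 2 with hT
  have hTle : T ≤ MxR := by
    rw [hT]
    calc ∑ l, (rowSq A l / F) * (r l) ^ 2 ≤ ∑ l, (rowSq A l / F) * MxR := by
          refine Finset.sum_le_sum (fun l _ => ?_)
          exact mul_le_mul_of_nonneg_left (hMxRub l) (div_nonneg (hrow l).le hFpos.le)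
      _ = MxR := by
          rw [← Finset.sum_mul, ← Finset.sum_div, ← hFs, div_self hFpos.ne', one_mul]
  -- Ik is nonempty: it contains the argmax
  obtain ⟨imax, himax⟩ := hMxR.1
  simp only [] at himax
  have himaxIk : imax ∈ Ik := by
    rw [hIk, himax]; linarith
  -- weights
  set d : Fin m → ℝ := fun i => (r i) ^ 2 / rowSq A i with hd
  have hdnn : ∀ i, 0 ≤ d i := fun i => div_nonneg (sq_nonneg _) (hrow i).le
  set D : ℝ := ∑ j ∈ Ik, d j with hD
  have hDpos : 0 < D := by
    rw [hD]
    refine Finset.sum_pos' (fun j _ => hdnn j) ⟨imax, himaxIk, ?_⟩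
    have h5 : 0 < (r imax) ^ 2 := by rw [himax]; exact hMxRpos
    exact div_pos h5 (hrow imax)
  have hp : ∀ i, grmkProb A b xk Ik i = d i / D := fun i => rfl
  have hpsum : ∑ i ∈ Ik, d i / D = 1 := by
    rw [← Finset.sum_div, ← hD, div_self hDpos.ne']
  -- Kaczmarz one-step identity
  have key : ∀ i : Fin m, (∑ j, (kUpd A b xk i j - xs j) ^ 2) = E - d i := by
    intro i
    have hS : rowSq A i ≠ 0 := (hrow i).ne'
    have expand : ∀ j, (kUpd A b xk i j - xs j) ^ 2 =
        (xk j - xs j) ^ 2 + (2 * (r i / rowSq A i)) * (A i j * (xk j - xs j))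
          + (r i / rowSq A i) ^ 2 * (A i j) ^ 2 := by
      intro j; simp only [kUpd, Pi.add_apply, Pi.smul_apply, smul_eq_mul, ← hr]; ring
    rw [Finset.sum_congr rfl (fun j _ => expand j)]
    rw [Finset.sum_add_distrib, Finset.sum_add_distrib, ← Finset.mul_sum, ← Finset.mul_sum,
      hAe i]
    have hrs : ∑ j, (A i j) ^ 2 = rowSq A i := rfl
    rw [hrs, ← hE, hd]
    field_simp
    ring
  -- rewrite the LHS
  have hLHS : ∑ i ∈ Ik, grmkProb A b xk Ik i * ∑ j, (kUpd A b xk i j - xs j) ^ 2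
      = E - ∑ i ∈ Ik, (d i / D) * d i := by
    simp_rw [hp, key, mul_sub]
    rw [Finset.sum_sub_distrib, ← Finset.sum_mul, hpsum, one_mul]
  -- lower bound each d i on Ik
  obtain ⟨iMA, hiMAmem, hiMA⟩ := hMA.1
  have hMApos : 0 < MA := by rw [← hiMA]; exact hrow iMA
  have hdel : ∀ i ∈ Ik, ((1 / 2) * (MxR + T)) / MA ≤ d i := by
    intro i hi
    have h6 : (1 / 2) * (MxR + T) ≤ (r i) ^ 2 := (hIk i).mp hi
    have h7 : rowSq A i ≤ MA := hMA.2 ⟨i, hi, rfl⟩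
    calc ((1 / 2) * (MxR + T)) / MA ≤ (r i) ^ 2 / MA := by gcongr
      _ ≤ (r i) ^ 2 / rowSq A i := by gcongr; exact hrow i
      _ = d i := rfl
  have hsumlb : ((1 / 2) * (MxR + T)) / MA ≤ ∑ i ∈ Ik, (d i / D) * d i := by
    calc ((1 / 2) * (MxR + T)) / MA
        = ∑ i ∈ Ik, (d i / D) * (((1 / 2) * (MxR + T)) / MA) := by
          rw [← Finset.sum_mul, hpsum, one_mul]
      _ ≤ ∑ i ∈ Ik, (d i / D) * d i := by
          refine Finset.sum_le_sum (fun i hi => ?_)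
          exact mul_le_mul_of_nonneg_left (hdel i hi) (div_nonneg (hdnn i) hDpos.le)
  -- structure of F minus minimal row
  have hmAllle : ∀ i, mAll ≤ rowSq A i := fun i => hmAll.2 ⟨i, rfl⟩
  have hsplit : F = rowSq A j₀ + ∑ l ∈ Finset.univ.erase j₀, rowSq A l := by
    rw [hFs]; exact (Finset.add_sum_erase _ _ (Finset.mem_univ j₀)).symm
  have herasepos : 0 < ∑ l ∈ Finset.univ.erase j₀, rowSq A l := by
    haveI : Nontrivial (Fin m) := Fin.nontrivial_iff_two_le.mpr hm
    obtain ⟨i1, hi1⟩ := exists_ne j₀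
    exact Finset.sum_pos' (fun l _ => (hrow l).le)
      ⟨i1, Finset.mem_erase.mpr ⟨hi1, Finset.mem_univ _⟩, hrow i1⟩
  have hFmAll : 0 < F - mAll := by
    have := hmAllle j₀; linarith
  -- W : weighted residual
  set W : ℝ := ∑ l, rowSq A l * (r l) ^ 2 with hW
  have hrj₀ : r j₀ = 0 := hj₀
  have hWerase : W = ∑ l ∈ Finset.univ.erase j₀, rowSq A l * (r l) ^ 2 := by
    rw [hW]
    exact (Finset.sum_erase _ (by rw [hrj₀]; ring)).symm
  have hTW : T = W / F := by
    rw [hT, hW, Finset.sum_div]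
    exact Finset.sum_congr rfl (fun l _ => by ring)
  have hWle : W / (F - mAll) ≤ MxR := by
    rw [div_le_iff₀ hFmAll]
    calc W = ∑ l ∈ Finset.univ.erase j₀, rowSq A l * (r l) ^ 2 := hWerase
      _ ≤ ∑ l ∈ Finset.univ.erase j₀, rowSq A l * MxR := by
          refine Finset.sum_le_sum (fun l _ => ?_)
          exact mul_le_mul_of_nonneg_left (hMxRub l) (hrow l).le
      _ = (∑ l ∈ Finset.univ.erase j₀, rowSq A l) * MxR := by rw [Finset.sum_mul]
      _ ≤ (F - mAll) * MxR := by
          refine mul_le_mul_of_nonneg_right ?_ hMxRpos.le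
          have := hmAllle j₀; linarith
      _ = MxR * (F - mAll) := by ring
  -- lower bound W via mNe and spectral bound
  obtain ⟨iNe, hiNemem, hiNe⟩ := hmNe.1
  have hmNepos : 0 < mNe := by rw [← hiNe]; exact hrow iNe
  have hWge : mNe * (lam * E) ≤ W := by
    have h8 : mNe * ∑ l, (r l) ^ 2 ≤ W := by
      have h9 : ∑ l, mNe * (r l) ^ 2 = ∑ l ∈ Finset.univ.erase j₀, mNe * (r l) ^ 2 :=
        (Finset.sum_erase _ (by rw [hrj₀]; ring)).symm
      rw [hWerase, Finset.mul_sum, h9]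
      refine Finset.sum_le_sum (fun l hl => ?_)
      have hlne : l ≠ j₀ := (Finset.mem_erase.mp hl).1
      exact mul_le_mul_of_nonneg_right (hmNe.2 ⟨l, hlne, rfl⟩) (sq_nonneg _)
    calc mNe * (lam * E) ≤ mNe * ∑ l, (r l) ^ 2 := by
          exact mul_le_mul_of_nonneg_left hspec' hmNepos.le
      _ ≤ W := h8
  -- the scalar chain
  set c : ℝ := (1 / 2) * (mNe / MA) * (lam / F) * (F / (F - mAll) + 1) with hc
  have hchain : c * E ≤ ((1 / 2) * (MxR + T)) / MA := by
    have e1 : c * E = (1 / (2 * MA)) * (mNe * (lam * E)) * (1 / (F - mAll) + 1 / F) := by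
      rw [hc]; field_simp
    have e2 : (1 / (2 * MA)) * (mNe * (lam * E)) * (1 / (F - mAll) + 1 / F)
        ≤ (1 / (2 * MA)) * W * (1 / (F - mAll) + 1 / F) := by
      have hnn : (0:ℝ) ≤ 1 / (F - mAll) + 1 / F := by positivity
      have hnn2 : (0:ℝ) ≤ 1 / (2 * MA) := by positivity
      exact mul_le_mul_of_nonneg_right (mul_le_mul_of_nonneg_left hWge hnn2) hnn
    have e3 : (1 / (2 * MA)) * W * (1 / (F - mAll) + 1 / F)
        = (1 / (2 * MA)) * (W / (F - mAll) + W / F) := by ring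
    have e4 : (1 / (2 * MA)) * (W / (F - mAll) + W / F)
        ≤ (1 / (2 * MA)) * (MxR + T) := by
      rw [hTW]
      refine mul_le_mul_of_nonneg_left ?_ (by positivity)
      linarith
    have e5 : (1 / (2 * MA)) * (MxR + T) = ((1 / 2) * (MxR + T)) / MA := by
      field_simp
    linarith [e1, e2, e3, e4, e5]
  -- conclude
  rw [hLHS]
  have hfin : (1 - c) * E = E - c * E := by ring
  linarith [le_trans hchain hsumlb]
end

section
/- Let A ∈ ℝ^{m×n} have all rows nonzero, b ∈ ℝ^m, and x⋆ ∈ ℝⁿ with A x⋆ = b. Let λ > 0 satisfy ‖Au‖₂² ≥ λ‖u‖₂² for every u in the column space R(Aᵀ) of Aᵀ. Let x₀ ∈ ℝⁿ with x₀ − x⋆ ∈ R(Aᵀ) and x₀ ≠ x⋆, let r₀ = b − Ax₀, and define the index set I₀ = { i : |r₀^{(i)}|² ≥ (1/2)( max_{1≤l≤m} |r₀^{(l)}|² + Σ_{l=1}^m (‖A^{(l)}‖₂²/‖A‖_F²)|r₀^{(l)}|² ) }. Let A_{I₀} and b_{I₀} be the row submatrix of A and subvector of b indexed by I₀, and let μ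 > 0 satisfy ‖A_{I₀}y‖₂² ≤ μ‖y‖₂² for all y ∈ ℝⁿ. Let x₁ ∈ ℝⁿ satisfy A_{I₀}x₁ = b_{I₀} and x₁ − x₀ ∈ R(A_{I₀}ᵀ). Then ‖x₁ − x⋆‖₂² ≤ ( 1 − |I₀| · (min_{1≤i≤m}‖A^{(i)}‖₂²/μ) · (λ/‖A‖_F²) ) ‖x₀ − x⋆‖₂². -/
open Matrix

section RowSpan

variable {ι κ : Type*} [Fintype ι]

theorem sum_mul_eq_zero_of_eq_sum_rows (A : Matrix κ ι ℝ) {I : Finset κ} {z : κ → ℝ}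
    {d e : ι → ℝ} (hd : ∀ j, d j = ∑ i ∈ I, z i * A i j) (he : ∀ i ∈ I, (A *ᵥ e) i = 0) :
    ∑ j, d j * e j = 0 :=
  calc ∑ j, d j * e j = ∑ i ∈ I, z i * (A *ᵥ e) i := by
        simp only [hd, Finset.sum_mul, mulVec, dotProduct, Finset.mul_sum, mul_assoc]
        exact Finset.sum_comm
    _ = 0 := Finset.sum_eq_zero fun i hi => by rw [he i hi, mul_zero]

theorem sum_sq_sub_eq_sub_of_mem_rowSpan (A : Matrix κ ι ℝ) {I : Finset κ} {x₀ x₁ x : ι → ℝ}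
    (hsol : ∀ i ∈ I, (A *ᵥ x₁) i = (A *ᵥ x) i)
    (hmem : ∃ z : κ → ℝ, ∀ j, x₁ j - x₀ j = ∑ i ∈ I, z i * A i j) :
    ∑ j, (x₁ j - x j) ^ 2 = ∑ j, (x₀ j - x j) ^ 2 - ∑ j, (x₁ j - x₀ j) ^ 2 := by
  obtain ⟨z, hz⟩ := hmem
  have horth : ∑ j, (x₁ j - x₀ j) * (x₁ - x) j = 0 :=
    sum_mul_eq_zero_of_eq_sum_rows A hz fun i hi => by
      rw [mulVec_sub, Pi.sub_apply, hsol i hi, sub_self]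
  have hsplit : ∀ j, (x₀ j - x j) ^ 2
      = (x₁ j - x j) ^ 2 + (x₁ j - x₀ j) ^ 2 - 2 * ((x₁ j - x₀ j) * (x₁ - x) j) := fun j => by
    rw [Pi.sub_apply]; ring
  simp only [hsplit, Finset.sum_sub_distrib, Finset.sum_add_distrib, ← Finset.mul_sum, horth]
  ring

end RowSpan

section Rows

variable {m n : ℕ} (A : Matrix (Fin m) (Fin n) ℝ)

theorem rowSq_nonneg (i : Fin m) : 0 ≤ rowSq A i :=
  Finset.sum_nonneg fun _ _ => sq_nonneg _

theorem frobSq_nonneg : 0 ≤ frobSq A :=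
  Finset.sum_nonneg fun i _ => rowSq_nonneg A i

theorem sum_rowSq_div_frobSq_le_one : ∑ i, rowSq A i / frobSq A ≤ 1 := by
  rw [← Finset.sum_div]
  exact div_self_le_one _

theorem sum_rowSq_div_frobSq_mul_le {c : Fin m → ℝ} {M : ℝ} (hc : ∀ i, c i ≤ M) (hM : 0 ≤ M) :
    ∑ i, rowSq A i / frobSq A * c i ≤ M :=
  calc ∑ i, rowSq A i / frobSq A * c i ≤ ∑ i, rowSq A i / frobSq A * M :=
        Finset.sum_le_sum fun i _ =>
          mul_le_mul_of_nonneg_left (hc i) (div_nonneg (rowSq_nonneg A i) (frobSq_nonneg A))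
    _ = (∑ i, rowSq A i / frobSq A) * M := (Finset.sum_mul ..).symm
    _ ≤ M := mul_le_of_le_one_left hM (sum_rowSq_div_frobSq_le_one A)

theorem div_frobSq_mul_sum_le {c : Fin m → ℝ} {a : ℝ} (ha : ∀ i, a ≤ rowSq A i)
    (hc : ∀ i, 0 ≤ c i) :
    a / frobSq A * ∑ i, c i ≤ ∑ i, rowSq A i / frobSq A * c i := by
  rw [Finset.mul_sum]
  have := frobSq_nonneg A
  gcongr with i
  · exact hc i
  · exact ha i

theorem res_eq_mulVec_sub {b : Fin m → ℝ} {x y : Fin n → ℝ} {i : Fin m}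
    (h : (A *ᵥ x) i = b i) : res A b y i = (A *ᵥ (x - y)) i := by
  rw [res, mulVec_sub, Pi.sub_apply, h]

end Rows

/-- The block Kaczmarz update `x₁ = x₀ + A_{I₀}†(b_{I₀} − A_{I₀}x₀)` is characterized by
`A_{I₀}x₁ = b_{I₀}` and `x₁ − x₀ ∈ R(A_{I₀}ᵀ)`. -/
theorem gmbk_first_step_bound_general (m n : ℕ)
    (A : Matrix (Fin m) (Fin n) ℝ)
    (b : Fin m → ℝ) (xs : Fin n → ℝ) (hxs : A.mulVec xs = b)
    (lam : ℝ)
    (hspecA : ∀ u : Fin n → ℝ, (∃ y : Fin m → ℝ, u = Aᵀ.mulVec y) →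
      ∑ i, (A.mulVec u i) ^ 2 ≥ lam * ∑ j, (u j) ^ 2)
    (x0 : Fin n → ℝ) (hx0mem : ∃ y : Fin m → ℝ, x0 - xs = Aᵀ.mulVec y)
    (MxR : ℝ) (hMxR : IsGreatest (Set.range fun i => (res A b x0 i) ^ 2) MxR)
    (I0 : Finset (Fin m))
    (hI0 : ∀ i, i ∈ I0 ↔ (res A b x0 i) ^ 2 ≥
      (1 / 2) * (MxR + ∑ l, (rowSq A l / frobSq A) * (res A b x0 l) ^ 2))
    (μ : ℝ) (hμ : 0 < μ)
    (hspecI : ∀ y : Fin n → ℝ, ∑ i ∈ I0, (A.mulVec y i) ^ 2 ≤ μ * ∑ j, (y j) ^ 2)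
    (mA : ℝ) (hmA : IsLeast (Set.range fun i => rowSq A i) mA)
    (x1 : Fin n → ℝ)
    (hx1sol : ∀ i ∈ I0, A.mulVec x1 i = b i)
    (hx1mem : ∃ z : Fin m → ℝ, ∀ j, x1 j - x0 j = ∑ i ∈ I0, z i * A i j) :
    ∑ j, (x1 j - xs j) ^ 2
      ≤ (1 - (I0.card : ℝ) * (mA / μ) * (lam / frobSq A)) * ∑ j, (x0 j - xs j) ^ 2 := by
  set E₀ := ∑ j, (x0 j - xs j) ^ 2
  set D := ∑ j, (x1 j - x0 j) ^ 2
  set W := ∑ l, rowSq A l / frobSq A * res A b x0 l ^ 2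
  have hres : ∀ i, res A b x0 i ^ 2 = (A *ᵥ (x0 - xs)) i ^ 2 := fun i => by
    rw [res_eq_mulVec_sub A (congrFun hxs i), ← neg_sub, mulVec_neg, Pi.neg_apply, neg_sq]
  have hE₀ : lam * E₀ ≤ ∑ l, res A b x0 l ^ 2 := by
    simpa only [hres, Pi.sub_apply, ge_iff_le] using hspecA (x0 - xs) hx0mem
  have hW_lower : mA / frobSq A * (lam * E₀) ≤ W := by
    obtain ⟨i, hi⟩ := hmA.1
    calc mA / frobSq A * (lam * E₀) ≤ _ :=
          mul_le_mul_of_nonneg_left hE₀ (div_nonneg (hi ▸ rowSq_nonneg A i) (frobSq_nonneg A))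
      _ ≤ W := div_frobSq_mul_sum_le A (fun l => hmA.2 ⟨l, rfl⟩) fun l => sq_nonneg _
  have hW_le : ∀ i ∈ I0, W ≤ res A b x0 i ^ 2 := by
    obtain ⟨i, hi⟩ := hMxR.1
    have := sum_rowSq_div_frobSq_mul_le A (fun l => hMxR.2 ⟨l, rfl⟩) (hi ▸ sq_nonneg _)
    intro k hk
    linarith [(hI0 k).1 hk]
  have hstep : ∑ i ∈ I0, res A b x0 i ^ 2 ≤ μ * D := by
    rw [Finset.sum_congr rfl fun i hi => by rw [res_eq_mulVec_sub A (hx1sol i hi)]]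
    simpa only [Pi.sub_apply] using hspecI (x1 - x0)
  have hcard : (I0.card : ℝ) * W ≤ ∑ i ∈ I0, res A b x0 i ^ 2 := by
    simpa using Finset.card_nsmul_le_sum I0 _ W hW_le
  rw [sum_sq_sub_eq_sub_of_mem_rowSpan A (fun i hi => by rw [hx1sol i hi, hxs]) hx1mem]
  have hdecrease : (I0.card : ℝ) * (mA / μ) * (lam / frobSq A) * E₀ ≤ D := by
    rw [show (I0.card : ℝ) * (mA / μ) * (lam / frobSq A) * E₀
        = I0.card * (mA / frobSq A * (lam * E₀)) / μ by ring, div_le_iff₀ hμ]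
    linarith [mul_le_mul_of_nonneg_left hW_lower (Nat.cast_nonneg (α := ℝ) I0.card)]
  linarith

/-- the first-step bound (1a) of Theorem 2 for the GMBK method. The block
Kaczmarz update `x₁ = x₀ + A_{I₀}†(b_{I₀} − A_{I₀}x₀)` is characterized by
`A_{I₀}x₁ = b_{I₀}` and `x₁ − x₀ ∈ R(A_{I₀}ᵀ)`. -/
theorem gmbk_first_step_bound (m n : ℕ)
    (A : Matrix (Fin m) (Fin n) ℝ)
    (hA : ∀ i, (fun j => A i j) ≠ 0)
    (b : Fin m → ℝ) (xs : Fin n → ℝ) (hxs : A.mulVec xs = b)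
    (lam : ℝ) (hlam : 0 < lam)
    (hspecA : ∀ u : Fin n → ℝ, (∃ y : Fin m → ℝ, u = Aᵀ.mulVec y) →
      ∑ i, (A.mulVec u i) ^ 2 ≥ lam * ∑ j, (u j) ^ 2)
    (x0 : Fin n → ℝ) (hx0mem : ∃ y : Fin m → ℝ, x0 - xs = Aᵀ.mulVec y)
    (hx0ne : x0 ≠ xs)
    (MxR : ℝ) (hMxR : IsGreatest (Set.range fun i => (res A b x0 i) ^ 2) MxR)
    (I0 : Finset (Fin m))
    (hI0 : ∀ i, i ∈ I0 ↔ (res A b x0 i) ^ 2 ≥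
      (1 / 2) * (MxR + ∑ l, (rowSq A l / frobSq A) * (res A b x0 l) ^ 2))
    (μ : ℝ) (hμ : 0 < μ)
    (hspecI : ∀ y : Fin n → ℝ, ∑ i ∈ I0, (A.mulVec y i) ^ 2 ≤ μ * ∑ j, (y j) ^ 2)
    (mA : ℝ) (hmA : IsLeast (Set.range fun i => rowSq A i) mA)
    (x1 : Fin n → ℝ)
    (hx1sol : ∀ i ∈ I0, A.mulVec x1 i = b i)
    (hx1mem : ∃ z : Fin m → ℝ, ∀ j, x1 j - x0 j = ∑ i ∈ I0, z i * A i j) :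
    ∑ j, (x1 j - xs j) ^ 2
      ≤ (1 - (I0.card : ℝ) * (mA / μ) * (lam / frobSq A)) * ∑ j, (x0 j - xs j) ^ 2 :=
  gmbk_first_step_bound_general m n A b xs hxs lam hspecA x0 hx0mem MxR hMxR I0 hI0 μ hμ hspecI mA
    hmA x1 hx1sol hx1mem
end

section
/- Let B ∈ ℝ^{s×n}, c ∈ ℝ^s, and x⋆ ∈ ℝⁿ with B x⋆ = c. Fix a row index i of B with B^{(i)} ≠ 0 and a point x ∈ ℝⁿ. Let x^M = x + ((c^{(i)} − B^{(i)}x)/‖B^{(i)}‖₂²)(B^{(i)})ᵀ be the Kaczmarz update of x using row i, and let x^B ∈ ℝⁿ satisfy B x^B = c and x^B − x ∈ R(Bᵀ) (the block Kaczmarz update of x using all rows of B). Then ‖x^M − x‖₂² ≤ ‖x^B − x‖₂² and ‖x^B − x⋆‖₂² ≤ ‖x^M − x⋆‖₂². -/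
open Matrix

/-! Both steps move `x` within the row space `R(Bᵀ)`, while `x^B − x⋆` lies in `ker B`, its
orthogonal complement. The Kaczmarz step `x^M − x` is the orthogonal projection of
`x^B − x` onto the line spanned by `B^{(i)}` (since `B^{(i)} x^B = c^{(i)}`), hence is no
longer than it. And `x^M − x^B ∈ R(Bᵀ)` is orthogonal to `x^B − x⋆ ∈ ker B`, so Pythagoras
gives `‖x^M − x⋆‖² = ‖x^M − x^B‖² + ‖x^B − x⋆‖²`. -/

lemma sum_sq_eq_dotProduct_self {ι R : Type*} [Fintype ι] [Semiring R] (v : ι → R) :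
    ∑ j, v j ^ 2 = v ⬝ᵥ v := by
  simp only [dotProduct, sq]

lemma sum_sub_sq_eq_dotProduct_self {ι R : Type*} [Fintype ι] [Ring R] (u v : ι → R) :
    ∑ j, (u j - v j) ^ 2 = (u - v) ⬝ᵥ (u - v) :=
  sum_sq_eq_dotProduct_self (u - v)

section

variable {ι R : Type*} [Fintype ι] [CommRing R] [LinearOrder R] [IsStrictOrderedRing R]

lemma dotProduct_self_nonneg (v : ι → R) : 0 ≤ v ⬝ᵥ v :=
  Finset.sum_nonneg fun j _ => mul_self_nonneg (v j)

lemma sq_dotProduct_le (u v : ι → R) : (u ⬝ᵥ v) ^ 2 ≤ (u ⬝ᵥ u) * (v ⬝ᵥ v) := by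
  rw [← sum_sq_eq_dotProduct_self u, ← sum_sq_eq_dotProduct_self v]
  exact Finset.sum_mul_sq_le_sq_mul_sq Finset.univ u v

lemma dotProduct_self_le_dotProduct_self_add {u v : ι → R} (h : u ⬝ᵥ v = 0) :
    v ⬝ᵥ v ≤ (u + v) ⬝ᵥ (u + v) := by
  have huv : v ⬝ᵥ u = 0 := by rwa [dotProduct_comm]
  rw [add_dotProduct, dotProduct_add, dotProduct_add, h, huv, add_zero, zero_add]
  exact le_add_of_nonneg_left (dotProduct_self_nonneg u)

end

/-- For `a = 0` the coefficient is `0 / 0 = 0`, so the left side is `0`. -/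
lemma dotProduct_self_smul_div_le {ι 𝕜 : Type*} [Fintype ι] [Field 𝕜] [LinearOrder 𝕜]
    [IsStrictOrderedRing 𝕜] (a v : ι → 𝕜) :
    ((a ⬝ᵥ v / (a ⬝ᵥ a)) • a) ⬝ᵥ ((a ⬝ᵥ v / (a ⬝ᵥ a)) • a) ≤ v ⬝ᵥ v := by
  rw [smul_dotProduct, dotProduct_smul, smul_eq_mul, smul_eq_mul, ← mul_assoc, ← sq]
  rcases (dotProduct_self_nonneg a).eq_or_lt with ha | ha
  · rw [← ha, mul_zero]
    exact dotProduct_self_nonneg v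
  · rw [div_pow, sq (a ⬝ᵥ a), div_mul_eq_mul_div, mul_div_mul_right _ _ ha.ne',
      div_le_iff₀ ha, mul_comm]
    exact sq_dotProduct_le a v

lemma transpose_mulVec_dotProduct_eq_zero {m n R : Type*} [Fintype m] [Fintype n]
    [CommSemiring R] {B : Matrix m n R} (z : m → R) {e : n → R} (he : B *ᵥ e = 0) :
    (Bᵀ *ᵥ z) ⬝ᵥ e = 0 := by
  rw [mulVec_transpose, ← dotProduct_mulVec, he, dotProduct_zero]

theorem gmbk_vs_grmk_step_general (s n : ℕ)
    (B : Matrix (Fin s) (Fin n) ℝ) (c : Fin s → ℝ)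
    (xs : Fin n → ℝ) (hxs : B.mulVec xs = c)
    (i : Fin s)
    (x : Fin n → ℝ)
    (xM : Fin n → ℝ)
    (hxM : xM = x + ((c i - B.mulVec x i) / ∑ j, (B i j) ^ 2) • (fun j => B i j))
    (xB : Fin n → ℝ)
    (hxBsol : B.mulVec xB = c)
    (hxBmem : ∃ z : Fin s → ℝ, xB - x = Bᵀ.mulVec z) :
    (∑ j, (xM j - x j) ^ 2 ≤ ∑ j, (xB j - x j) ^ 2) ∧
    (∑ j, (xB j - xs j) ^ 2 ≤ ∑ j, (xM j - xs j) ^ 2) := by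
  obtain ⟨z, hz⟩ := hxBmem
  have hker : B *ᵥ (xB - xs) = 0 := by rw [mulVec_sub, hxBsol, hxs, sub_self]
  have hres : c i - (B *ᵥ x) i = B i ⬝ᵥ (xB - x) := by
    rw [← hxBsol, ← Pi.sub_apply, ← mulVec_sub]
    rfl
  have hstep : xM - x = (B i ⬝ᵥ (xB - x) / (B i ⬝ᵥ B i)) • B i := by
    rw [hxM, hres, sum_sq_eq_dotProduct_self, add_sub_cancel_left]
  simp only [sum_sub_sq_eq_dotProduct_self]
  constructor
  · rw [hstep]
    exact dotProduct_self_smul_div_le _ _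
  · have horth : (xM - xB) ⬝ᵥ (xB - xs) = 0 := by
      have hdiff : xM - xB = (B i ⬝ᵥ (xB - x) / (B i ⬝ᵥ B i)) • B i - (xB - x) := by
        rw [← hstep]
        abel
      rw [hdiff, sub_dotProduct, smul_dotProduct, hz, transpose_mulVec_dotProduct_eq_zero z hker,
        show B i ⬝ᵥ (xB - xs) = 0 from congrFun hker i, smul_zero, sub_zero]
    simpa only [sub_add_sub_cancel] using dotProduct_self_le_dotProduct_self_add horth

/-- Remark 5: the single-row Kaczmarz (Motzkin) step `x^M` moves at most as
far as the block Kaczmarz step `x^B` (orthogonal projection onto `{y : By = c}`,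
characterized by `Bx^B = c` and `x^B − x ∈ R(Bᵀ)`), and the block step ends at least as
close to the solution `x⋆`. -/
theorem gmbk_vs_grmk_step (s n : ℕ)
    (B : Matrix (Fin s) (Fin n) ℝ) (c : Fin s → ℝ)
    (xs : Fin n → ℝ) (hxs : B.mulVec xs = c)
    (i : Fin s) (hrow : (fun j => B i j) ≠ 0)
    (x : Fin n → ℝ)
    (xM : Fin n → ℝ)
    (hxM : xM = x + ((c i - B.mulVec x i) / ∑ j, (B i j) ^ 2) • (fun j => B i j))
    (xB : Fin n → ℝ)
    (hxBsol : B.mulVec xB = c)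
    (hxBmem : ∃ z : Fin s → ℝ, xB - x = Bᵀ.mulVec z) :
    (∑ j, (xM j - x j) ^ 2 ≤ ∑ j, (xB j - x j) ^ 2) ∧
    (∑ j, (xB j - xs j) ^ 2 ≤ ∑ j, (xM j - xs j) ^ 2) :=
  gmbk_vs_grmk_step_general s n B c xs hxs i x xM hxM xB hxBsol hxBmem
end
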